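/- For integers k_1,...,k_r ≥ 1 and integers n ≥ r ≥ 1, the multi-Lah numbers satisfy L^{(k_1,...,k_r)}(n,r) = Σ_{l=r}^{n} Σ_{m=r}^{l} S_1^{(k_1,...,k_r)}(m,r) · (−1)^{m−l} · S_2(l,m) · binom(r+n−l−1, n−l) · n!/l!, where S_2 are the Stirling numbers of the second kind. -/

import Mathlib

/-!
Expand `Li(1 - e^{-t}) = Σ_m liCoeff(m) (1 - e^{-t})^m` and
`(1 - t)^{-r} = Σ_j C(r + j - 1, j) t^j`. Since `1 - e^{-t}` is `-(e^t - 1)` with `t ↦ -t`,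
the coefficient of `t^l` in `(1 - e^{-t})^m` is `(-1)^{m+l} m! S_2(l, m) / l!`. It vanishes for
`l < m` (as `t ∣ 1 - e^{-t}`), and `liCoeff(m)` vanishes for `m < r` (no strictly increasing
`r`-tuple fits in `{1, …, m}`), so the Cauchy product of the two series collapses to the double
sum over `r ≤ m ≤ l ≤ n`.
-/

open scoped Classical in
/-- The coefficient of `z^n` in the multiple logarithm
`Li_{k_1,...,k_r}(z) = Σ_{0<m_1<⋯<m_r} z^{m_r}/(m_1^{k_1}⋯m_r^{k_r})`, i.e.
`Σ_{0<m_1<⋯<m_{r-1}<m_r=n} 1/(m_1^{k_1}⋯m_r^{k_r})` (integer indices allowed; for a strictly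
increasing positive tuple, `m_r` is the supremum of its entries). -/
noncomputable def liCoeff (r : ℕ) (k : Fin r → ℤ) (n : ℕ) : ℚ :=
  ∑ m : Fin r → Fin (n + 1),
    if StrictMono m ∧ (∀ i, 0 < m i) ∧ (Finset.univ.sup fun i => (m i : ℕ)) = n then
      (∏ i, ((m i : ℕ) : ℚ) ^ (k i))⁻¹
    else 0

/-- Multi-Stirling numbers of the first kind:
`S_1^{(k_1,...,k_r)}(n,r) = n! ⬝ Σ_{0<m_1<⋯<m_{r-1}<n} 1/(m_1^{k_1}⋯m_{r-1}^{k_{r-1}} n^{k_r})`,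
so that `Li_{k_1,...,k_r}(t) = Σ_{n≥r} S_1^{(k_1,...,k_r)}(n,r) t^n/n!`. -/
noncomputable def multiStirling1 (r : ℕ) (k : Fin r → ℕ) (n : ℕ) : ℚ :=
  (n.factorial : ℚ) * liCoeff r (fun i => (k i : ℤ)) n

/-- The formal power series `1 - e^{-t} ∈ ℚ⟦t⟧`. -/
noncomputable def oneSubExpNeg : PowerSeries ℚ :=
  1 - PowerSeries.rescale (-1) (PowerSeries.exp ℚ)

/-- Multi-Lah numbers, defined by the formal power series identity
`Σ_{n≥r} L^{(k_1,...,k_r)}(n,r) t^n/n! = Li_{k_1,...,k_r}(1-e^{-t})/(1-t)^r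
  = (1-t)^{-r} ⬝ Σ_{m} liCoeff(m) (1-e^{-t})^m` in `ℚ⟦t⟧` (integer indices allowed).
Since `(1-e^{-t})^m` has order `≥ m`, the `n`-th coefficient of the series only involves the
(finitely many) terms with `m ≤ n`, so the infinite sum may be truncated exactly. -/
noncomputable def multiLah (r : ℕ) (k : Fin r → ℤ) (n : ℕ) : ℚ :=
  (n.factorial : ℚ) *
    PowerSeries.coeff n
      (((1 - PowerSeries.X : PowerSeries ℚ) ^ r)⁻¹ *
        ∑ m ∈ Finset.range (n + 1), liCoeff r k m • oneSubExpNeg ^ m)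

/-- Stirling numbers of the second kind, defined by `(e^t-1)^j/j! = Σ_{n≥j} S_2(n,j) t^n/n!`. -/
noncomputable def stirling2 (n j : ℕ) : ℚ :=
  (n.factorial : ℚ) / j.factorial * PowerSeries.coeff n ((PowerSeries.exp ℚ - 1) ^ j)

open PowerSeries Finset

-- At `r = 0` the truncated subtraction still gives the correct value `[j = 0]`.
theorem coeff_inv_one_sub_X_pow {K : Type*} [Field K] (r j : ℕ) :
    coeff j ((1 - X : K⟦X⟧) ^ r)⁻¹ = ((r + j - 1).choose j : K) := by
  rcases r with _ | d
  · cases j <;> simp [coeff_one]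
  · have hinv : ((1 - X : K⟦X⟧) ^ (d + 1))⁻¹ = invOneSubPow K (d + 1) := by
      rw [PowerSeries.inv_eq_iff_mul_eq_one (by simp), ← invOneSubPow_inv_eq_one_sub_pow]
      exact (invOneSubPow K (d + 1)).val_inv
    rw [hinv, invOneSubPow_val_succ_eq_mk_add_choose, coeff_mk, add_right_comm,
      Nat.add_sub_cancel, Nat.choose_symm_add]

theorem coeff_pow_eq_zero_of_X_dvd {R : Type*} [CommSemiring R] {φ : R⟦X⟧} (hφ : X ∣ φ)
    {l m : ℕ} (hlm : l < m) : coeff l (φ ^ m) = 0 :=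
  X_pow_dvd_iff.mp (pow_dvd_pow_of_dvd hφ m) l hlm

theorem X_dvd_oneSubExpNeg : X ∣ oneSubExpNeg :=
  X_dvd_iff.mpr <| by
    rw [← coeff_zero_eq_constantCoeff_apply, oneSubExpNeg, map_sub, coeff_rescale]
    simp

theorem oneSubExpNeg_eq_neg_rescale : oneSubExpNeg = -rescale (-1) (exp ℚ - 1) := by
  rw [oneSubExpNeg, map_sub, map_one, neg_sub]

theorem coeff_oneSubExpNeg_pow (l m : ℕ) :
    coeff l (oneSubExpNeg ^ m) =
      (-1 : ℚ) ^ ((m : ℤ) - l) * stirling2 l m * m.factorial / l.factorial := by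
  have hsign : (-1 : ℚ) ^ ((m : ℤ) - l) = (-1) ^ m * (-1) ^ l := by
    rw [zpow_sub₀ (by norm_num), zpow_natCast, zpow_natCast, div_eq_mul_inv, ← inv_pow,
      inv_neg_one]
  rw [oneSubExpNeg_eq_neg_rescale, neg_pow, ← map_pow,
    show (-1 : ℚ⟦X⟧) ^ m = C ((-1) ^ m) by simp, coeff_C_mul, coeff_rescale, hsign, stirling2]
  field_simp

theorem liCoeff_eq_zero_of_lt (r : ℕ) (k : Fin r → ℤ) {m : ℕ} (hm : m < r) :
    liCoeff r k m = 0 := by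
  refine sum_eq_zero fun f _ => if_neg ?_
  rintro ⟨hmono, hpos, -⟩
  have hsub : univ.image f ⊆ univ.erase 0 := fun x hx => by
    obtain ⟨i, -, rfl⟩ := mem_image.mp hx
    exact mem_erase.mpr ⟨(hpos i).ne', mem_univ _⟩
  have hcard := card_le_card hsub
  rw [card_image_of_injective _ hmono.injective, card_erase_of_mem (mem_univ _), card_univ,
    card_univ, Fintype.card_fin, Fintype.card_fin] at hcard
  omega

theorem coeff_sum_liCoeff_smul_oneSubExpNeg_pow (r : ℕ) (k : Fin r → ℤ) {l n : ℕ} (hl : l ≤ n) :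
    coeff l (∑ m ∈ range (n + 1), liCoeff r k m • oneSubExpNeg ^ m) =
      ∑ m ∈ Icc r l, liCoeff r k m * coeff l (oneSubExpNeg ^ m) := by
  simp only [map_sum, LinearMap.map_smul, smul_eq_mul]
  refine (sum_subset (fun m hm => ?_) fun m _ hm => ?_).symm
  · simp only [mem_Icc, mem_range] at hm ⊢
    omega
  · rcases lt_or_ge m r with hmr | hrm
    · rw [liCoeff_eq_zero_of_lt r k hmr, zero_mul]
    · rw [mem_Icc] at hm
      rw [coeff_pow_eq_zero_of_X_dvd X_dvd_oneSubExpNeg (by omega), mul_zero]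

theorem multiLah_eq_sum_multiStirling1_general (r : ℕ) (k : Fin r → ℕ) (n : ℕ) :
    multiLah r (fun i => (k i : ℤ)) n =
      ∑ l ∈ Finset.Icc r n, ∑ m ∈ Finset.Icc r l,
        multiStirling1 r k m * (-1 : ℚ) ^ ((m : ℤ) - (l : ℤ)) * stirling2 l m *
          ((r + n - l - 1).choose (n - l) : ℚ) * ((n.factorial : ℚ) / (l.factorial : ℚ)) := by
  rw [multiLah]
  set S := ∑ m ∈ range (n + 1), liCoeff r (fun i => (k i : ℤ)) m • oneSubExpNeg ^ m
  have hterm : ∀ l ∈ range (n + 1),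
      n.factorial * (coeff l S * coeff (n - l) ((1 - X : ℚ⟦X⟧) ^ r)⁻¹) =
        ∑ m ∈ Icc r l, multiStirling1 r k m * (-1 : ℚ) ^ ((m : ℤ) - (l : ℤ)) * stirling2 l m *
          ((r + n - l - 1).choose (n - l) : ℚ) * ((n.factorial : ℚ) / (l.factorial : ℚ)) := by
    intro l hl
    rw [mem_range_succ_iff] at hl
    rw [coeff_sum_liCoeff_smul_oneSubExpNeg_pow _ _ hl, coeff_inv_one_sub_X_pow,
      ← Nat.add_sub_assoc hl, sum_mul, mul_sum]
    refine sum_congr rfl fun m _ => ?_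
    rw [coeff_oneSubExpNeg_pow, multiStirling1]
    ring
  rw [mul_comm _ S, coeff_mul,
    Nat.sum_antidiagonal_eq_sum_range_succ (fun i j => coeff i S * coeff j ((1 - X) ^ r)⁻¹),
    mul_sum, sum_congr rfl hterm]
  refine (sum_subset (fun l hl => ?_) fun l hln hl => ?_).symm
  · simp only [mem_Icc, mem_range] at hl ⊢
    omega
  · rw [Icc_eq_empty fun h => hl (mem_Icc.mpr ⟨h, mem_range_succ_iff.mp hln⟩), sum_empty]

/-- For integers `k_1,...,k_r ≥ 1` and `n ≥ r ≥ 1`, the multi-Lah numbers satisfy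
`L^{(k_1,...,k_r)}(n,r) = Σ_{l=r}^{n} Σ_{m=r}^{l} S_1^{(k_1,...,k_r)}(m,r) ⬝ (−1)^{m−l}
  ⬝ S_2(l,m) ⬝ C(r+n−l−1, n−l) ⬝ n!/l!`. -/
theorem multiLah_eq_sum_multiStirling1 (r : ℕ) (hr : 1 ≤ r) (k : Fin r → ℕ)
    (hk : ∀ i, 1 ≤ k i) (n : ℕ) (hn : r ≤ n) :
    multiLah r (fun i => (k i : ℤ)) n =
      ∑ l ∈ Finset.Icc r n, ∑ m ∈ Finset.Icc r l,
        multiStirling1 r k m * (-1 : ℚ) ^ ((m : ℤ) - (l : ℤ)) * stirling2 l m *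
          ((r + n - l - 1).choose (n - l) : ℚ) * ((n.factorial : ℚ) / (l.factorial : ℚ)) :=
  multiLah_eq_sum_multiStirling1_general r k n
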